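/- arXiv:2208.13602 — 3 statements merged into one kernel-verified Lean document; each statement's English description precedes it below -/
import Mathlib

section
/- Let p ∈ (1/2, 1), let (B_k)_{k≥1} be i.i.d. Bernoulli random variables with Pr(B_k = 1) = p, and let m ∈ ℕ. Define the reflected random walk (ν_k)_{k≥0} by ν_0 = m and, for k ≥ 1, ν_k = ν_{k−1} + 1 if B_k = 1 or ν_{k−1} = 0, and ν_k = ν_{k−1} − 1 otherwise. Then for every real constant c with 0 < c < 2p − 1 and every t ∈ ℕ with t ≥ 1, Pr(ν_t < m + c·t) ≤ exp(−(2p−1−c)²·t/2). -/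
/-!
Reflection at `0` only ever pushes the walk up, so pathwise `ν_t ≥ m + S_t` with `S_t` the free
`±1` walk driven by the same coins. `S_t` is a sum of `t` independent signs of mean `2p - 1`, and
Hoeffding's inequality bounds its lower tail at `c t` by `exp (-(2p - 1 - c)² t / 2)`.
-/

open MeasureTheory ProbabilityTheory

def signOfBool (b : Bool) : ℝ := if b then 1 else -1

lemma signOfBool_le_reflectedStep (b : Bool) (n : ℕ) :
    signOfBool b ≤ ((if b = true ∨ n = 0 then n + 1 else n - 1 : ℕ) : ℝ) - n := by
  cases b <;> rcases n with _ | n <;> simp [signOfBool]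

lemma add_sum_signOfBool_le_reflectedWalk {b : ℕ → Bool} {ν : ℕ → ℕ}
    (hν : ∀ k, ν (k + 1) = if b (k + 1) = true ∨ ν k = 0 then ν k + 1 else ν k - 1) (k : ℕ) :
    (ν 0 : ℝ) + ∑ i ∈ Finset.Icc 1 k, signOfBool (b i) ≤ ν k := by
  induction k with
  | zero => simp
  | succ k ih =>
    have hstep := signOfBool_le_reflectedStep (b (k + 1)) (ν k)
    rw [← hν] at hstep
    rw [Finset.sum_Icc_succ_top (Nat.le_add_left 1 k)]
    linarith

section Bernoulli

variable {Ω : Type*} [MeasurableSpace Ω] {μ : Measure Ω} [IsProbabilityMeasure μ]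

lemma integral_signOfBool {B : Ω → Bool} (hB : Measurable B) :
    μ[fun ω ↦ signOfBool (B ω)] = 2 * μ.real {ω | B ω = true} - 1 := by
  have hA : MeasurableSet {ω | B ω = true} := hB (measurableSet_singleton true)
  have hsign : (fun ω ↦ signOfBool (B ω))
      = fun ω ↦ {ω | B ω = true}.indicator (fun _ ↦ (2 : ℝ)) ω - 1 := by
    ext ω
    cases h : B ω <;> norm_num [signOfBool, h]
  rw [hsign, integral_sub ((integrable_const _).indicator hA) (integrable_const _),
    integral_indicator_const _ hA, integral_const]
  simp only [smul_eq_mul, probReal_univ, mul_one, sub_left_inj]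
  ring

lemma hasSubgaussianMGF_integral_sub_signOfBool {B : Ω → Bool} (hB : Measurable B) :
    HasSubgaussianMGF (fun ω ↦ μ[fun ω ↦ signOfBool (B ω)] - signOfBool (B ω)) 1 μ := by
  have hX : AEMeasurable (fun ω ↦ -signOfBool (B ω)) μ :=
    (measurable_of_finite signOfBool).comp hB |>.neg.aemeasurable
  have := hasSubgaussianMGF_of_mem_Icc (a := -1) (b := 1) hX
    (ae_of_all _ fun ω ↦ by cases B ω <;> simp [signOfBool])
  convert this using 2 with ω
  · rw [integral_neg]; ring
  · norm_num

lemma measureReal_sum_signOfBool_le_le {B : ℕ → Ω → Bool} (hBmeas : ∀ k, Measurable (B k))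
    (hBindep : iIndepFun B μ) {p : ℝ} (hp : 0 ≤ p)
    (hBp : ∀ k, μ {ω | B k ω = true} = ENNReal.ofReal p)
    (s : Finset ℕ) {a : ℝ} (ha : a ≤ 2 * p - 1) :
    μ.real {ω | ∑ i ∈ s, signOfBool (B i ω) ≤ a * s.card}
      ≤ Real.exp (-(2 * p - 1 - a) ^ 2 * s.card / 2) := by
  have hmean : ∀ i, μ[fun ω ↦ signOfBool (B i ω)] = 2 * p - 1 := fun i ↦ by
    rw [integral_signOfBool (hBmeas i), measureReal_def, hBp i, ENNReal.toReal_ofReal hp]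
  have hY : iIndepFun (fun i ω ↦ 2 * p - 1 - signOfBool (B i ω)) μ :=
    hBindep.comp (fun _ b ↦ 2 * p - 1 - signOfBool b) (fun _ ↦ measurable_of_finite _)
  have hoeffding := HasSubgaussianMGF.measure_sum_ge_le_of_iIndepFun hY
    (s := s) (fun i _ ↦ hmean i ▸ hasSubgaussianMGF_integral_sub_signOfBool (hBmeas i))
    (ε := (2 * p - 1 - a) * s.card) (mul_nonneg (by linarith) s.card.cast_nonneg)
  refine (measureReal_mono fun ω hω ↦ ?_).trans (hoeffding.trans_eq ?_)
  · simp only [Set.mem_ofPred_eq, Finset.sum_sub_distrib, Finset.sum_const,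
      nsmul_eq_mul] at hω ⊢
    linarith
  · rcases eq_or_ne (s.card : ℝ) 0 with h | h
    · simp [h]
    · simp only [Finset.sum_const, nsmul_eq_mul, NNReal.coe_natCast, mul_one]
      field_simp

end Bernoulli

theorem reflected_walk_lower_tail_general
    {Ω : Type*} [MeasurableSpace Ω] (μ : Measure Ω) [IsProbabilityMeasure μ]
    (p : ℝ) (hp : p ∈ Set.Ioo (1/2 : ℝ) 1)
    (B : ℕ → Ω → Bool) (hBmeas : ∀ k, Measurable (B k))
    (hBindep : iIndepFun B μ)
    (hBp : ∀ k, μ {ω | B k ω = true} = ENNReal.ofReal p)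
    (m : ℕ) (ν : ℕ → Ω → ℕ)
    (hν0 : ∀ ω, ν 0 ω = m)
    (hνrec : ∀ k ω, ν (k + 1) ω =
      if B (k + 1) ω = true ∨ ν k ω = 0 then ν k ω + 1 else ν k ω - 1)
    (c : ℝ) (hc' : c < 2 * p - 1) (t : ℕ) :
    μ {ω | (ν t ω : ℝ) < m + c * t}
      ≤ ENNReal.ofReal (Real.exp (-(2 * p - 1 - c) ^ 2 * t / 2)) := by
  have hcard : ((Finset.Icc 1 t).card : ℝ) = t := by simp
  have hsub : {ω | (ν t ω : ℝ) < m + c * t}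
      ⊆ {ω | ∑ i ∈ Finset.Icc 1 t, signOfBool (B i ω) ≤ c * t} := by
    intro ω hω
    have hwalk := add_sum_signOfBool_le_reflectedWalk (b := fun k ↦ B k ω) (ν := fun k ↦ ν k ω)
      (fun k ↦ hνrec k ω) t
    simp only [Set.mem_ofPred_eq, hν0] at hω hwalk ⊢
    linarith
  have htail := measureReal_sum_signOfBool_le_le hBmeas hBindep (by linarith [hp.1]) hBp
    (Finset.Icc 1 t) hc'.le
  rw [hcard] at htail
  rw [← ofReal_measureReal]
  exact ENNReal.ofReal_le_ofReal ((measureReal_mono hsub).trans htail)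

/-- Reflected random walk driven by i.i.d. Bernoulli(p) variables `B_k` (`k ≥ 1`):
`ν_0 = m`, and `ν_k = ν_{k−1} + 1` if `B_k = 1` or `ν_{k−1} = 0`, else `ν_k = ν_{k−1} − 1`.
For `p ∈ (1/2,1)`, `0 < c < 2p−1` and `t ≥ 1`,
`Pr(ν_t < m + c·t) ≤ exp(−(2p−1−c)²·t/2)`. -/
theorem reflected_walk_lower_tail
    {Ω : Type*} [MeasurableSpace Ω] (μ : Measure Ω) [IsProbabilityMeasure μ]
    (p : ℝ) (hp : p ∈ Set.Ioo (1/2 : ℝ) 1)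
    (B : ℕ → Ω → Bool) (hBmeas : ∀ k, Measurable (B k))
    (hBindep : iIndepFun B μ)
    (hBp : ∀ k, μ {ω | B k ω = true} = ENNReal.ofReal p)
    (m : ℕ) (ν : ℕ → Ω → ℕ)
    (hν0 : ∀ ω, ν 0 ω = m)
    (hνrec : ∀ k ω, ν (k + 1) ω =
      if B (k + 1) ω = true ∨ ν k ω = 0 then ν k ω + 1 else ν k ω - 1)
    (c : ℝ) (hc : 0 < c) (hc' : c < 2 * p - 1) (t : ℕ) (ht : 1 ≤ t) :
    μ {ω | (ν t ω : ℝ) < m + c * t}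
      ≤ ENNReal.ofReal (Real.exp (-(2 * p - 1 - c) ^ 2 * t / 2)) :=
  reflected_walk_lower_tail_general μ p hp B hBmeas hBindep hBp m ν hν0 hνrec c hc' t
end

section
/- Let n ≥ 1, let π be a uniformly random permutation of {1,…,n}, let c ∈ (0, 1/2) and let t ∈ {1,…,n} with t ≤ c·n. Then for every real g ≥ 1, the probability that there exists j ∈ ℕ with g ≤ 2^j ≤ n and |{1,…,2^j} ∩ {π(1),…,π(t)}| > 2^{j−1} is at most c·(1/2 − c)^{−2} · 2/g. -/
/-! For `m = 2 ^ j ≤ n`, the number `Y = |A ∩ π(T)|` of points of `A = {1,…,m}` hit by time `t`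
is hypergeometric. Its factorial moments come from counting embeddings `Fin k ↪ α`, on which the
permutation group acts transitively; they give mean `μ = tm/n ≤ cm` and variance at most `μ`.
Chebyshev then bounds the probability of `Y > m/2 ≥ μ + (1/2 - c) m` by `c (1/2 - c)⁻² / m`, and
a union bound over the dyadic `m ≥ g` sums to at most `c (1/2 - c)⁻² · 2/g`. -/

open scoped Classical

open Finset Function
open scoped Nat

theorem MulAction.card_filter_smul_mem_mul_card {G X : Type*} [Group G] [Fintype G]
    [MulAction G X] [MulAction.IsPretransitive G X] [Fintype X] (x : X) (S : Finset X) :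
    #{g : G | g • x ∈ S} * Fintype.card X = Fintype.card G * #S := by
  -- the fibres of `g ↦ g • x` are left translates of the stabilizer
  have fiber_eq (y : X) : #{g : G | g • x = y} = #{g : G | g • x = x} := by
    obtain ⟨h, rfl⟩ := MulAction.exists_smul_eq G x y
    refine card_bij' (fun g _ => h⁻¹ * g) (fun g _ => h * g) ?_ ?_ ?_ ?_ <;>
      simp +contextual [mul_smul]
  have card_fibers (S : Finset X) : #{g : G | g • x ∈ S} = #S * #{g : G | g • x = x} := by
    rw [card_eq_sum_card_fiberwise (f := (· • x)) (t := S) fun g hg => by simpa using hg,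
      ← smul_eq_mul, ← sum_const]
    refine sum_congr rfl fun y hy => ?_
    rw [filter_filter, ← fiber_eq y]
    congr 1; ext g; constructor <;> simp +contextual [hy]
  have := card_fibers univ
  simp only [mem_univ, filter_true, card_univ] at this
  rw [card_fibers, this]; ring

theorem card_filter_embedding_forall_mem {ι α : Type*} [Fintype ι] [DecidableEq ι] [Fintype α]
    [DecidableEq α] (B : Finset α) :
    #{e : ι ↪ α | ∀ i, e i ∈ B} = (#B).descFactorial (Fintype.card ι) := by
  rw [← Fintype.card_subtype, ← Fintype.card_coe B, ← Fintype.card_embedding_eq]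
  exact Fintype.card_congr
    { toFun := fun e => e.1.codRestrict B e.2
      invFun := fun e => ⟨e.trans (Embedding.subtype _), fun i => (e i).2⟩
      left_inv := fun e => rfl
      right_inv := fun e => rfl }

theorem Finset.card_filter_add_le_mul_sq_le_sum_sq {ι : Type*} (s : Finset ι) (f : ι → ℝ)
    {μ d : ℝ} (hd : 0 ≤ d) : #{x ∈ s | μ + d ≤ f x} * d ^ 2 ≤ ∑ x ∈ s, (f x - μ) ^ 2 :=
  calc (#{x ∈ s | μ + d ≤ f x} : ℝ) * d ^ 2 = ∑ x ∈ s with μ + d ≤ f x, d ^ 2 := by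
        rw [sum_const, nsmul_eq_mul]
    _ ≤ ∑ x ∈ s with μ + d ≤ f x, (f x - μ) ^ 2 :=
        sum_le_sum fun x hx => pow_le_pow_left₀ hd (by linarith [(mem_filter.1 hx).2]) 2
    _ ≤ ∑ x ∈ s, (f x - μ) ^ 2 :=
        sum_le_sum_of_subset_of_nonneg (filter_subset _ _) fun _ _ _ => sq_nonneg _

theorem sum_inv_two_pow_le_two_div {J : Finset ℕ} {g : ℝ} (hg : 0 < g) (hJ : ∀ j ∈ J, g ≤ 2 ^ j) :
    ∑ j ∈ J, ((2 : ℝ) ^ j)⁻¹ ≤ 2 / g := by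
  rcases J.eq_empty_or_nonempty with rfl | hne
  · simp only [sum_empty]; positivity
  set j₀ := J.min' hne
  have shift : ∀ j ∈ J, ((2 : ℝ) ^ j)⁻¹ = ((2 : ℝ) ^ j₀)⁻¹ * (1 / 2) ^ (j - j₀) := by
    intro j hj
    rw [← Nat.add_sub_cancel' (J.min'_le j hj), pow_add, mul_inv, Nat.add_sub_cancel_left,
      one_div, inv_pow]
  calc ∑ j ∈ J, ((2 : ℝ) ^ j)⁻¹
        = ((2 : ℝ) ^ j₀)⁻¹ * ∑ i ∈ J.image (· - j₀), (1 / 2 : ℝ) ^ i := by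
        rw [sum_congr rfl shift, ← mul_sum, sum_image]
        intro i hi j hj hij
        have := J.min'_le i hi; have := J.min'_le j hj
        simp only at hij; omega
    _ ≤ ((2 : ℝ) ^ j₀)⁻¹ * 2 := by
        gcongr
        exact (summable_geometric_two.sum_le_tsum _ fun _ _ => by positivity).trans_eq
          tsum_geometric_two
    _ ≤ g⁻¹ * 2 := by gcongr; exact hJ _ (J.min'_mem hne)
    _ = 2 / g := by ring

namespace Equiv.Perm

open Fintype

variable {α : Type*} [DecidableEq α]

theorem card_inter_image (π : Perm α) (A T : Finset α) :
    #(A ∩ T.image π) = #{s ∈ T | π s ∈ A} := by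
  rw [inter_comm, ← filter_mem_eq_inter, filter_image, card_image_of_injective _ π.injective]

variable [Fintype α]

theorem card_filter_forall_mem_mul_descFactorial {ι : Type*} [Fintype ι] [DecidableEq ι]
    (x : ι ↪ α) (A : Finset α) :
    #{π : Perm α | ∀ i, π (x i) ∈ A} * (card α).descFactorial (card ι) =
      (card α)! * (#A).descFactorial (card ι) := by
  have : MulAction.IsPretransitive (Perm α) (ι ↪ α) := ⟨exists_smul_eq_embedding⟩
  have := MulAction.card_filter_smul_mem_mul_card (G := Perm α) x {e | ∀ i, e i ∈ A}
  simpa [card_embedding_eq, Fintype.card_perm, card_filter_embedding_forall_mem] using this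

theorem descFactorial_mul_sum_descFactorial_card_filter_mem (T A : Finset α) (k : ℕ) :
    (card α).descFactorial k * ∑ π : Perm α, (#{s ∈ T | π s ∈ A}).descFactorial k =
      (card α)! * ((#T).descFactorial k * (#A).descFactorial k) := by
  have card_embeddings (B : Finset α) : #{e : Fin k ↪ α | ∀ i, e i ∈ B} = (#B).descFactorial k :=
    by convert card_filter_embedding_forall_mem (ι := Fin k) B; simp
  have moment (π : Perm α) : (#{s ∈ T | π s ∈ A}).descFactorial k =
      #{e ∈ {e : Fin k ↪ α | ∀ i, e i ∈ T} | ∀ i, π (e i) ∈ A} := by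
    rw [← card_embeddings, filter_filter]
    simp only [mem_filter, forall_and]
  simp only [moment]
  have double_count := sum_card_bipartiteAbove_eq_sum_card_bipartiteBelow (s := univ)
    (t := {e : Fin k ↪ α | ∀ i, e i ∈ T}) (fun (π : Perm α) e => ∀ i, π (e i) ∈ A)
  simp only [bipartiteAbove, bipartiteBelow] at double_count
  have term (e : Fin k ↪ α) :
      (card α).descFactorial k * #{π : Perm α | ∀ i, π (e i) ∈ A} =
        (card α)! * (#A).descFactorial k := by
    rw [mul_comm]
    convert card_filter_forall_mem_mul_descFactorial e A <;> simp
  rw [double_count, mul_sum, sum_congr rfl fun e _ => term e, sum_const, card_embeddings,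
    smul_eq_mul]
  ring

theorem sum_card_filter_mem_mul_sub_one_le (hα : 1 < card α) (T A : Finset α) :
    ∑ π : Perm α, (#{s ∈ T | π s ∈ A} : ℝ) * (#{s ∈ T | π s ∈ A} - 1) ≤
      (card α)! * (#T * #A / card α) ^ 2 := by
  have second := congrArg (Nat.cast (R := ℝ))
    (descFactorial_mul_sum_descFactorial_card_filter_mem T A 2)
  push_cast [Nat.cast_descFactorial_two] at second
  have hn : (1 : ℝ) < card α := by exact_mod_cast hα
  have ht : (#T : ℝ) ≤ card α := by exact_mod_cast card_le_univ T
  have hm : (#A : ℝ) ≤ card α := by exact_mod_cast card_le_univ A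
  have hm1 : (0 : ℝ) ≤ #A * (#A - 1) := by rw [← Nat.cast_descFactorial_two]; positivity
  set n : ℝ := (card α : ℝ)
  set t : ℝ := (#T : ℝ)
  set m : ℝ := (#A : ℝ)
  have key : t * (t - 1) * (m * (m - 1)) * n ≤ (t * m) ^ 2 * (n - 1) := by
    nlinarith [mul_nonneg (mul_nonneg (sq_nonneg t) (by positivity : 0 ≤ m)) (sub_nonneg.2 hm),
      mul_nonneg (mul_nonneg (by positivity : 0 ≤ t) (by linarith : 0 ≤ n)) hm1]
  have hn1 : 0 < n - 1 := by linarith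
  refine le_of_mul_le_mul_right ?_ (show 0 < n * (n * (n - 1)) by positivity)
  calc _ = n * (n * (n - 1) * ∑ π : Perm α, (#{s ∈ T | π s ∈ A} : ℝ) *
          (#{s ∈ T | π s ∈ A} - 1)) := by ring
    _ = (card α)! * (t * (t - 1) * (m * (m - 1)) * n) := by rw [second]; ring
    _ ≤ (card α)! * ((t * m) ^ 2 * (n - 1)) := by gcongr
    _ = _ := by field_simp

theorem sum_sq_card_filter_mem_sub_le (hα : 1 < card α) (T A : Finset α) :
    ∑ π : Perm α, ((#{s ∈ T | π s ∈ A} : ℝ) - #T * #A / card α) ^ 2 ≤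
      (card α)! * (#T * #A / card α) := by
  have first := descFactorial_mul_sum_descFactorial_card_filter_mem T A 1
  simp only [Nat.descFactorial_one] at first
  have pairs := sum_card_filter_mem_mul_sub_one_le hα T A
  have hn : (0 : ℝ) < card α := by exact_mod_cast zero_lt_one.trans hα
  have mean : ∑ π : Perm α, (#{s ∈ T | π s ∈ A} : ℝ) = (card α)! * (#T * #A / card α) := by
    rw [mul_div_assoc', eq_div_iff hn.ne', mul_comm]
    exact_mod_cast first
  set μ : ℝ := #T * #A / card α
  set Y : Perm α → ℝ := fun π => (#{s ∈ T | π s ∈ A} : ℝ)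
  calc ∑ π, (Y π - μ) ^ 2 = ∑ π, (Y π * (Y π - 1) + (1 - 2 * μ) * Y π + μ ^ 2) :=
        sum_congr rfl fun π _ => by ring
    _ = ∑ π, Y π * (Y π - 1) + (1 - 2 * μ) * ∑ π, Y π + (card α)! * μ ^ 2 := by
        rw [sum_add_distrib, sum_add_distrib, ← mul_sum, sum_const, card_univ, card_perm,
          nsmul_eq_mul]
    _ ≤ (card α)! * μ := by rw [mean]; nlinarith

theorem card_filter_half_lt_card_inter_image_le {c : ℝ} (hc : c < 1 / 2) {T A : Finset α}
    (hT : T.Nonempty) (hTc : (#T : ℝ) ≤ c * card α) (hA : A.Nonempty) :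
    (#{π : Perm α | (#A : ℝ) / 2 < #(A ∩ T.image π)} : ℝ) ≤
      (card α)! * (c * ((1 / 2 - c) ^ 2)⁻¹ / #A) := by
  have hT1 : (1 : ℝ) ≤ #T := by exact_mod_cast hT.card_pos
  have hm : (0 : ℝ) < #A := by exact_mod_cast hA.card_pos
  have hα : 1 < card α := by
    have : (1 : ℝ) < card α := by nlinarith
    exact_mod_cast this
  have hn : (0 : ℝ) < card α := by positivity
  set μ : ℝ := #T * #A / card α
  have hμ : μ ≤ c * #A := by
    rw [div_le_iff₀ hn]; nlinarith
  have gap : 0 < (#A : ℝ) * (1 / 2 - c) := by nlinarith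
  have event_sub : ({π : Perm α | (#A : ℝ) / 2 < #(A ∩ T.image π)} : Finset (Perm α)) ⊆
      ({π : Perm α | μ + #A * (1 / 2 - c) ≤ #{s ∈ T | π s ∈ A}} : Finset (Perm α)) := by
    intro π hπ
    simp only [mem_filter, mem_univ, true_and, card_inter_image] at hπ ⊢
    nlinarith
  have chebyshev := card_filter_add_le_mul_sq_le_sum_sq univ
    (fun π : Perm α => (#{s ∈ T | π s ∈ A} : ℝ)) (μ := μ) gap.le
  have variance := sum_sq_card_filter_mem_sub_le hα T A
  calc (#{π : Perm α | (#A : ℝ) / 2 < #(A ∩ T.image π)} : ℝ)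
      ≤ #{π : Perm α | μ + #A * (1 / 2 - c) ≤ #{s ∈ T | π s ∈ A}} := by
        exact_mod_cast card_le_card event_sub
    _ ≤ (card α)! * (c * #A) / (#A * (1 / 2 - c)) ^ 2 := by
        rw [le_div_iff₀ (by positivity)]
        calc _ ≤ _ := chebyshev
          _ ≤ (card α)! * μ := variance
          _ ≤ _ := by gcongr
    _ = (card α)! * (c * ((1 / 2 - c) ^ 2)⁻¹ / #A) := by field_simp

end Equiv.Perm

theorem card_filter_prefix_half_full_le {n t m : ℕ} {c : ℝ} (hc : c < 1 / 2) (ht1 : 1 ≤ t)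
    (htn : t ≤ n) (htc : (t : ℝ) ≤ c * n) (hm : 1 ≤ m) (hmn : m ≤ n) :
    (#{π : Equiv.Perm (Fin n) | (m : ℝ) / 2 <
        #(univ.filter (fun i : Fin n => (i : ℕ) < m) ∩
          (univ.filter fun i : Fin n => (i : ℕ) < t).image π)} : ℝ) ≤
      n ! * (c * ((1 / 2 - c) ^ 2)⁻¹ / m) := by
  have card_prefix {k : ℕ} (hk : k ≤ n) : #{i : Fin n | (i : ℕ) < k} = k := by
    simp [Fin.card_filter_val_lt, hk]
  have := Equiv.Perm.card_filter_half_lt_card_inter_image_le hc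
    (T := univ.filter fun i : Fin n => (i : ℕ) < t) (A := univ.filter fun i : Fin n => (i : ℕ) < m)
    (card_pos.1 (by rw [card_prefix htn]; omega)) (by rwa [card_prefix htn, Fintype.card_fin])
    (card_pos.1 (by rw [card_prefix hmn]; omega))
  rwa [card_prefix hmn, Fintype.card_fin] at this

theorem no_dyadic_prefix_half_full_general (n : ℕ)
    (c : ℝ) (hc : c ∈ Set.Ioo (0 : ℝ) (1 / 2))
    (t : ℕ) (ht1 : 1 ≤ t) (htn : t ≤ n) (htc : (t : ℝ) ≤ c * n)
    (g : ℝ) (hg : 1 ≤ g) :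
    ((Finset.univ.filter (fun π : Equiv.Perm (Fin n) =>
        ∃ j : ℕ, g ≤ (2 : ℝ) ^ j ∧ (2 : ℝ) ^ j ≤ n ∧
          (((Finset.univ.filter (fun i : Fin n => (i : ℕ) < 2 ^ j)) ∩
              (Finset.univ.filter (fun i : Fin n => (i : ℕ) < t)).image π).card : ℝ)
            > (2 : ℝ) ^ j / 2)).card : ℝ) / (n.factorial : ℝ)
      ≤ c * ((1 / 2 - c) ^ 2)⁻¹ * 2 / g := by
  set E : ℕ → Finset (Equiv.Perm (Fin n)) := fun j => univ.filter fun π =>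
    (#(univ.filter (fun i : Fin n => (i : ℕ) < 2 ^ j) ∩
      (univ.filter fun i : Fin n => (i : ℕ) < t).image π) : ℝ) > (2 : ℝ) ^ j / 2
  set J := (range (n + 1)).filter fun j => g ≤ (2 : ℝ) ^ j ∧ (2 : ℝ) ^ j ≤ n
  have level (j : ℕ) (hj : j ∈ J) :
      (#(E j) : ℝ) ≤ n ! * (c * ((1 / 2 - c) ^ 2)⁻¹) * ((2 : ℝ) ^ j)⁻¹ := by
    have h2j : 2 ^ j ≤ n := by exact_mod_cast (mem_filter.1 hj).2.2
    simpa [E, mul_div_assoc, div_eq_mul_inv, mul_assoc] using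
      card_filter_prefix_half_full_le hc.2 ht1 htn htc j.one_le_two_pow h2j
  rw [div_le_iff₀ (by positivity)]
  calc _ ≤ (#(J.biUnion E) : ℝ) := by
        gcongr
        intro π hπ
        obtain ⟨j, hgj, hjn, hev⟩ := (mem_filter.1 hπ).2
        have hj : j < n + 1 :=
          (j.lt_two_pow_self.trans_le (by exact_mod_cast hjn)).trans n.lt_succ_self
        exact mem_biUnion.2
          ⟨j, mem_filter.2 ⟨mem_range.2 hj, hgj, hjn⟩, mem_filter.2 ⟨mem_univ _, hev⟩⟩
    _ ≤ ∑ j ∈ J, (#(E j) : ℝ) := by exact_mod_cast card_biUnion_le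
    _ ≤ n ! * (c * ((1 / 2 - c) ^ 2)⁻¹) * ∑ j ∈ J, ((2 : ℝ) ^ j)⁻¹ := by
        rw [mul_sum]; exact sum_le_sum level
    _ ≤ n ! * (c * ((1 / 2 - c) ^ 2)⁻¹) * (2 / g) := by
        refine mul_le_mul_of_nonneg_left ?_
          (mul_nonneg (by positivity) (mul_nonneg hc.1.le (by positivity)))
        exact sum_inv_two_pow_le_two_div (by linarith) fun j hj => (mem_filter.1 hj).2.1
    _ = _ := by ring

/-- For a uniformly random permutation `π` of `{1,…,n}` (with `n ≥ 1`), a constant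
`c ∈ (0,1/2)`, a time `t ∈ {1,…,n}` with `t ≤ c·n`, and a real `g ≥ 1`, the probability
that some dyadic prefix `A_j = {1,…,2^j}` with `g ≤ 2^j ≤ n` is more than half-full
at time `t` (i.e. `|A_j ∩ {π(1),…,π(t)}| > 2^(j−1)`) is at most `c·(1/2 − c)⁻²·2/g`. -/
theorem no_dyadic_prefix_half_full (n : ℕ) (hn : 1 ≤ n)
    (c : ℝ) (hc : c ∈ Set.Ioo (0 : ℝ) (1 / 2))
    (t : ℕ) (ht1 : 1 ≤ t) (htn : t ≤ n) (htc : (t : ℝ) ≤ c * n)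
    (g : ℝ) (hg : 1 ≤ g) :
    ((Finset.univ.filter (fun π : Equiv.Perm (Fin n) =>
        ∃ j : ℕ, g ≤ (2 : ℝ) ^ j ∧ (2 : ℝ) ^ j ≤ n ∧
          (((Finset.univ.filter (fun i : Fin n => (i : ℕ) < 2 ^ j)) ∩
              (Finset.univ.filter (fun i : Fin n => (i : ℕ) < t)).image π).card : ℝ)
            > (2 : ℝ) ^ j / 2)).card : ℝ) / (n.factorial : ℝ)
      ≤ c * ((1 / 2 - c) ^ 2)⁻¹ * 2 / g :=
  no_dyadic_prefix_half_full_general n c hc t ht1 htn htc g hg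
end

section
/- Let n, ℓ ∈ ℕ, let β : {0,…,ℓ} → ℕ and let α : {1,…,ℓ+1} → ℕ be nondecreasing with α(ℓ+1) ≤ n and β(ℓ) ≤ 2n. Assume that for every j ∈ {0,…,ℓ−1}, either β(j+1) = 2·β(j), or both β(j+1) ≤ β(j) and β(j) − β(j+1) ≤ α(j+2) − α(j+1). Then Σ_{i ∈ {1,…,ℓ} : β(i) > β(i−1)} β(i) ≤ 6n. -/
open scoped Classical

/-- Combinatorial core of the `O(n log n)` worst-case bound for Lua hybrid tables:
`β j` is the hashmap capacity after the `j`-th rehash and `α j` the array-part size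
just before the `j`-th rehash; `α` is nondecreasing on `{1,…,ℓ+1}` with `α(ℓ+1) ≤ n`
and `β ℓ ≤ 2n`, and at each rehash either the hash capacity doubles, or it does not
increase and its decrease is absorbed by the growth of the array-part. Then the
total capacity over the rehashes where the hash-part grows is at most `6n`. -/
theorem rehash_doubling_cost_le (n ℓ : ℕ) (β α : ℕ → ℕ)
    (hα_mono : ∀ j, 1 ≤ j → j ≤ ℓ → α j ≤ α (j + 1))
    (hα_top : α (ℓ + 1) ≤ n) (hβ_top : β ℓ ≤ 2 * n)
    (hstep : ∀ j, j < ℓ →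
      β (j + 1) = 2 * β j ∨
      (β (j + 1) ≤ β j ∧ β j - β (j + 1) ≤ α (j + 2) - α (j + 1))) :
    ∑ i ∈ (Finset.Icc 1 ℓ).filter (fun i => β (i - 1) < β i), β i ≤ 6 * n := by
  set S : ℕ → ℕ := fun m => ∑ i ∈ (Finset.Icc 1 m).filter (fun i => β (i - 1) < β i), β i
    with hS
  set D : ℕ → ℕ := fun m => ∑ j ∈ Finset.range m, (β j - β (j + 1)) with hD
  have key : ∀ m, m ≤ ℓ → S m ≤ 2 * β m + 2 * D m ∧ D m + α 1 ≤ α (m + 1) := by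
    intro m
    induction m with
    | zero =>
      intro _
      constructor
      · simp [hS, hD]
      · simp [hD]
    | succ m ih =>
      intro hm
      have hmℓ : m < ℓ := hm
      obtain ⟨ih1, ih2⟩ := ih hmℓ.le
      have hDsucc : D (m + 1) = D m + (β m - β (m + 1)) := Finset.sum_range_succ _ _
      have hd : β m - β (m + 1) ≤ α (m + 2) - α (m + 1) := by
        rcases hstep m hmℓ with h | h
        · have : β m ≤ β (m + 1) := by omega
          simp [Nat.sub_eq_zero_of_le this]
        · exact h.2
      have hαm : α (m + 1) ≤ α (m + 2) := hα_mono (m + 1) (by omega) (by omega)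
      have hD2 : D (m + 1) + α 1 ≤ α (m + 2) := by
        have h1 : α (m + 2) - α (m + 1) + α (m + 1) = α (m + 2) := Nat.sub_add_cancel hαm
        omega
      refine ⟨?_, hD2⟩
      have hSsucc : S (m + 1) = S m + (if β m < β (m + 1) then β (m + 1) else 0) := by
        have h1 : Finset.Icc 1 (m + 1) = insert (m + 1) (Finset.Icc 1 m) := by
          ext x; simp [Finset.mem_Icc]; omega
        have h2 : (m + 1) ∉ Finset.Icc 1 m := by simp
        simp only [hS, h1, Finset.filter_insert]
        by_cases hc : β m < β (m + 1)
        · have : β (m + 1 - 1) < β (m + 1) := by simpa using hc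
          rw [if_pos this, Finset.sum_insert (fun hx => h2 (Finset.mem_of_mem_filter _ hx))]
          simp [hc]
          ring
        · have : ¬ β (m + 1 - 1) < β (m + 1) := by simpa using hc
          rw [if_neg this]
          simp [hc]
      by_cases hc : β m < β (m + 1)
      · have hdbl : β (m + 1) = 2 * β m := by
          rcases hstep m hmℓ with h | h
          · exact h
          · omega
        have hzero : β m - β (m + 1) = 0 := by omega
        rw [hSsucc, if_pos hc]
        omega
      · rw [hSsucc, if_neg hc]
        omega
  obtain ⟨k1, k2⟩ := key ℓ le_rfl
  have : D ℓ ≤ n := by omega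
  calc S ℓ ≤ 2 * β ℓ + 2 * D ℓ := k1
    _ ≤ 6 * n := by omega
end
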